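/- Let η ∈ (0,1], let A ∈ ℝ^{n×n} be an orthogonal projection matrix (Aᵀ = A and A·A = A), and let v ∈ ℝ^n be a unit vector (‖v‖₂ = 1). Then the matrix S = η A + (I − η A) v vᵀ has nonnegative quadratic form: ⟨x, S x⟩ ≥ 0 for every x ∈ ℝ^n. -/

import Mathlib

open Matrix InnerProductSpace
open scoped RealInnerProductSpace

/-- The action of a real matrix on vectors of `EuclideanSpace`. -/
noncomputable def mulVecE {m n : Type*} [Fintype m] [Fintype n] [DecidableEq n]
    (A : Matrix m n ℝ) (v : EuclideanSpace ℝ n) : EuclideanSpace ℝ m :=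
  Matrix.toEuclideanLin A v

/-!
Let `P` be the operator of `A` and `t = ⟪v, x⟫`. Since `P` is a symmetric idempotent,
`⟪x, S x⟫ = η ‖P x‖² - η t ⟪P x, P v⟫ + t²`, and `‖P v‖ ≤ ‖v‖ = 1` gives
`|⟪P x, P v⟫| ≤ ‖P x‖`. The binary quadratic form `η a² - η a b + b²` has discriminant
`η (η - 4) ≤ 0`, so the expression is nonnegative (even for all `0 ≤ η ≤ 4`).
-/

theorem quadratic_nonneg_of_abs_le {η a s t : ℝ} (hη0 : 0 ≤ η) (hη4 : η ≤ 4)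
    (hs : |s| ≤ a) : 0 ≤ η * a ^ 2 - η * t * s + t ^ 2 := by
  have hts : t * s ≤ |t| * a := (le_abs_self _).trans <| by
    rw [abs_mul]; exact mul_le_mul_of_nonneg_left hs (abs_nonneg t)
  have hsq : 0 ≤ (|t| - η * a / 2) ^ 2 + η * (4 - η) / 4 * a ^ 2 := by positivity
  nlinarith [sq_abs t, mul_le_mul_of_nonneg_left hts hη0]

namespace LinearMap.IsSymmetricProjection

variable {𝕜 E : Type*} [RCLike 𝕜] [NormedAddCommGroup E] [InnerProductSpace 𝕜 E]
  {T : E →ₗ[𝕜] E}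

theorem inner_apply_right (hT : T.IsSymmetricProjection) (x y : E) :
    inner 𝕜 x (T y) = inner 𝕜 (T x) (T y) := by
  rw [hT.isSymmetric x (T y), ← Module.End.mul_apply, hT.isIdempotentElem.eq]

theorem norm_apply_le (hT : T.IsSymmetricProjection) (x : E) : ‖T x‖ ≤ ‖x‖ := by
  have h : ‖T x‖ ^ 2 ≤ ‖x‖ * ‖T x‖ := by
    rw [← inner_self_eq_norm_sq (𝕜 := 𝕜), ← hT.inner_apply_right]
    exact (RCLike.re_le_norm _).trans (norm_inner_le_norm _ _)
  nlinarith [norm_nonneg (T x), norm_nonneg x]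

end LinearMap.IsSymmetricProjection

theorem LinearMap.IsSymmetricProjection.inner_smul_add_sub_smul_mul_rankOne_apply_nonneg
    {E : Type*} [NormedAddCommGroup E] [InnerProductSpace ℝ E] {T : E →ₗ[ℝ] E}
    (hT : T.IsSymmetricProjection) {v : E} (hv : ‖v‖ ≤ 1) {η : ℝ} (hη0 : 0 ≤ η)
    (hη4 : η ≤ 4) (x : E) :
    0 ≤ ⟪x, (η • T + (1 - η • T) * (rankOne ℝ v v : E →ₗ[ℝ] E)) x⟫ := by
  have hexpand : ⟪x, (η • T + (1 - η • T) * (rankOne ℝ v v : E →ₗ[ℝ] E)) x⟫ =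
      η * ⟪x, T x⟫ - η * ⟪v, x⟫ * ⟪x, T v⟫ + ⟪v, x⟫ ^ 2 := by
    simp only [LinearMap.add_apply, LinearMap.smul_apply, Module.End.mul_apply,
      LinearMap.sub_apply, Module.End.one_apply, ContinuousLinearMap.coe_coe, rankOne_apply,
      map_smul, inner_add_right, inner_sub_right, inner_smul_right, real_inner_comm x v]
    ring
  rw [hexpand, hT.inner_apply_right x x, hT.inner_apply_right x v, real_inner_self_eq_norm_sq]
  refine quadratic_nonneg_of_abs_le hη0 hη4 ?_
  calc |⟪T x, T v⟫| ≤ ‖T x‖ * ‖T v‖ := abs_real_inner_le_norm _ _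
    _ ≤ ‖T x‖ := mul_le_of_le_one_right (norm_nonneg _) ((hT.norm_apply_le v).trans hv)

theorem Matrix.toEuclideanLin_of_mul_self {n : Type*} [Fintype n] [DecidableEq n]
    (v : EuclideanSpace ℝ n) :
    toEuclideanLin (Matrix.of fun i j => v i * v j) = (rankOne ℝ v v : _ →ₗ[ℝ] _) := by
  rw [← LinearEquiv.eq_symm_apply, symm_toEuclideanLin_rankOne]
  rfl

theorem Matrix.toEuclideanLin_mul {𝕜 n : Type*} [RCLike 𝕜] [Fintype n] [DecidableEq n]
    (M N : Matrix n n 𝕜) :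
    toEuclideanLin (M * N) = toEuclideanLin M * toEuclideanLin N :=
  map_mul (toLpLinAlgEquiv 2) M N

theorem Matrix.isSymmetricProjection_toEuclideanLin {n : Type*} [Fintype n] [DecidableEq n]
    {A : Matrix n n ℝ} (hAsymm : Aᵀ = A) (hAproj : A * A = A) :
    (toEuclideanLin A).IsSymmetricProjection where
  isIdempotentElem := by
    rw [IsIdempotentElem, ← toEuclideanLin_mul, hAproj]
  isSymmetric := isSymmetric_toEuclideanLin_iff.mpr (by simpa [IsHermitian] using hAsymm)

/-- **Nonnegativity of the quadratic form of `ηA + (I - ηA)vvᵀ`.**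
If `A` is an orthogonal projection matrix, `η ∈ (0,1]`, and `v` is a unit vector, then
`S = ηA + (I - ηA)vvᵀ` satisfies `⟨x, Sx⟩ ≥ 0` for every `x`. -/
theorem projection_rank_one_mix_nonneg_quadratic_form
    {n : ℕ} (η : ℝ) (hη0 : 0 < η) (hη1 : η ≤ 1)
    (A : Matrix (Fin n) (Fin n) ℝ) (hAsymm : Aᵀ = A) (hAproj : A * A = A)
    (v : EuclideanSpace ℝ (Fin n)) (hv : ‖v‖ = 1)
    (S : Matrix (Fin n) (Fin n) ℝ)
    (hS : S = η • A + ((1 : Matrix (Fin n) (Fin n) ℝ) - η • A) *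
        Matrix.of (fun i j => v i * v j)) :
    ∀ x : EuclideanSpace ℝ (Fin n), 0 ≤ ⟪x, mulVecE S x⟫ := by
  intro x
  have hS' : toEuclideanLin S = η • toEuclideanLin A +
      (1 - η • toEuclideanLin A) * (rankOne ℝ v v : _ →ₗ[ℝ] _) := by
    rw [hS, ← toEuclideanLin_of_mul_self, map_add, map_smul, toEuclideanLin_mul, map_sub,
      map_smul, toLpLin_one, Module.End.one_eq_id]
  rw [mulVecE, hS']
  exact (isSymmetricProjection_toEuclideanLin hAsymm hAproj)
    |>.inner_smul_add_sub_smul_mul_rankOne_apply_nonneg hv.le hη0.le (by linarith) x
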